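/- Let p be a prime, d ≥ 2, and let Q_p ∈ (ℤ/pℤ)[X₁,…,X_d] be a quadratic form. Suppose D_p ⊆ (ℤ/pℤ)^d is Q_p-generic over ℤ/pℤ. Let D ⊆ {1,2,…,p}^d ⊂ ℤ^d be the set of points whose coordinatewise reduction modulo p lies in D_p, and let Q ∈ ℤ[X₁,…,X_d] be a quadratic form whose coefficients have greatest common divisor 1 and whose reduction modulo p equals Q_p. Then |D| = |D_p| and D, viewed as a subset of ℝ^d, is Q-generic over ℝ (with Q regarded as a real quadratic form via its integer coefficients). -/

import Mathlib

/-!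
Reduction mod `p` maps `{1,…,p}^d` bijectively onto `(ℤ/pℤ)^d`, so `|D| = |D_p|`. Suppose a real
hyperplane, resp. a real `Q`-quadric, contains a set `T ⊆ D`. Then the vectors `(1, x)`, resp.
`(1, Q x, x)`, for `x ∈ T` satisfy a nontrivial real linear relation, hence a nontrivial integral
one, which may be taken primitive, so that it stays nontrivial mod `p`. Reduced mod `p` it puts
the reductions of the points of `T` on an affine hyperplane or on a `Q_p`-quadric of
`(ℤ/pℤ)^d`, and `Q_p`-genericity of `D_p` bounds `|T|`.
-/

/-- A subset `D ⊆ F^d` is `Q`-generic over `F` if every affine hyperplane of `F^d`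
contains at most `d` points of `D`, and every `Q`-quadric contains at most `d+1`
points of `D`. -/
def QGeneric {F : Type*} [Field F] {d : ℕ} (Q : MvPolynomial (Fin d) F)
    (D : Set (Fin d → F)) : Prop :=
  (∀ f : MvPolynomial (Fin d) F, f.totalDegree = 1 →
    {x ∈ D | MvPolynomial.eval x f = 0}.encard ≤ (d : ℕ∞)) ∧
  (∀ f : MvPolynomial (Fin d) F, f.totalDegree ≤ 1 →
    {x ∈ D | MvPolynomial.eval x (Q + f) = 0}.encard ≤ (d : ℕ∞) + 1)

open MvPolynomial Set

def reduceMod (p : ℕ) {ι : Type*} (x : ι → ℤ) : ι → ZMod p := Int.cast ∘ x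

section Relations

variable {ι : Type*} [Fintype ι]

theorem exists_ne_zero_dotProduct_eq_zero_of_algebraMap {K L : Type*} [Field K] [Field L]
    [Algebra K L] (S : Set (ι → K)) {α : ι → L} (hα : α ≠ 0)
    (h : ∀ v ∈ S, α ⬝ᵥ (algebraMap K L ∘ v) = 0) :
    ∃ q : ι → K, q ≠ 0 ∧ ∀ v ∈ S, q ⬝ᵥ v = 0 := by
  classical
  have hspan : Submodule.span K S < ⊤ := by
    refine lt_top_iff_ne_top.2 fun htop => hα ?_
    let A : (ι → K) →ₗ[K] L :=
      ((dotProductEquiv L ι α).restrictScalars K).comp ((Algebra.linearMap K L).compLeft ι)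
    have hA : Submodule.span K S ≤ LinearMap.ker A :=
      Submodule.span_le.2 fun v hv => h v hv
    funext j
    have hj : α ⬝ᵥ (algebraMap K L ∘ Pi.single j 1) = 0 :=
      hA (htop ▸ Submodule.mem_top (x := Pi.single j 1))
    simpa [Function.comp_def, Pi.single_apply, dotProduct] using hj
  obtain ⟨φ, hφ0, hφ⟩ := Submodule.exists_dual_map_eq_bot_of_lt_top hspan inferInstance
  refine ⟨(dotProductEquiv K ι).symm φ, by simpa using hφ0, fun v hv => ?_⟩
  have hφv : φ v ∈ (Submodule.span K S).map φ :=
    Submodule.mem_map_of_mem (Submodule.subset_span hv)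
  rw [hφ, Submodule.mem_bot] at hφv
  exact (congrArg (· v) ((dotProductEquiv K ι).apply_symm_apply φ)).trans hφv

theorem exists_ne_zero_dotProduct_eq_zero_of_isFractionRing {R K : Type*} [CommRing R]
    [IsDomain R] [Field K] [Algebra R K] [IsFractionRing R K] (S : Set (ι → R)) {q : ι → K}
    (hq : q ≠ 0) (h : ∀ v ∈ S, q ⬝ᵥ (algebraMap R K ∘ v) = 0) :
    ∃ c : ι → R, c ≠ 0 ∧ ∀ v ∈ S, c ⬝ᵥ v = 0 := by
  obtain ⟨b, hb⟩ := IsLocalization.exist_integer_multiples_of_finite (nonZeroDivisors R) q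
  choose c hc using hb
  have hb0 : algebraMap R K b ≠ 0 :=
    IsFractionRing.to_map_ne_zero_of_mem_nonZeroDivisors b.2
  have hcq : algebraMap R K ∘ c = algebraMap R K b • q := by
    funext i; simp [hc i, Algebra.smul_def]
  refine ⟨c, fun hc0 => hq ?_, fun v hv => ?_⟩
  · simpa [hc0, hb0] using hcq.symm
  · apply IsFractionRing.injective R K
    rw [RingHom.map_dotProduct, hcq, smul_dotProduct, h v hv, smul_zero, map_zero]

theorem exists_dotProduct_eq_zero_not_dvd {R : Type*} [CommRing R] [IsDomain R]
    [NormalizedGCDMonoid R] (S : Set (ι → R)) {c : ι → R} (hc : c ≠ 0)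
    (h : ∀ v ∈ S, c ⬝ᵥ v = 0) {n : R} (hn : ¬ IsUnit n) :
    ∃ c' : ι → R, (∃ i, ¬ n ∣ c' i) ∧ ∀ v ∈ S, c' ⬝ᵥ v = 0 := by
  classical
  have hne : Finset.univ.gcd c ≠ 0 := by
    rw [Ne, Finset.gcd_eq_zero_iff]
    simpa [funext_iff] using hc
  obtain ⟨i, -⟩ := Function.ne_iff.1 hc
  obtain ⟨c', hcc', hgcd⟩ := Finset.univ.extract_gcd c ⟨i, Finset.mem_univ i⟩
  have hc_eq : c = Finset.univ.gcd c • c' := funext fun i => hcc' i (Finset.mem_univ i)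
  refine ⟨c', ?_, fun v hv => ?_⟩
  · by_contra! hdvd
    exact hn (isUnit_of_dvd_one (hgcd ▸ Finset.dvd_gcd fun i _ => hdvd i))
  · have := h v hv
    rw [hc_eq, smul_dotProduct, smul_eq_mul] at this
    exact (mul_eq_zero.1 this).resolve_left hne

theorem exists_int_dotProduct_eq_zero_not_dvd (S : Set (ι → ℤ)) {α : ι → ℝ} (hα : α ≠ 0)
    (h : ∀ v ∈ S, α ⬝ᵥ (Int.cast ∘ v) = 0) {n : ℤ} (hn : ¬ IsUnit n) :
    ∃ c : ι → ℤ, (∃ i, ¬ n ∣ c i) ∧ ∀ v ∈ S, c ⬝ᵥ v = 0 := by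
  obtain ⟨q, hq, hqS⟩ := exists_ne_zero_dotProduct_eq_zero_of_algebraMap
    ((Int.cast ∘ ·) '' S : Set (ι → ℚ)) hα (by
      rintro _ ⟨v, hv, rfl⟩
      simpa [Function.comp_def] using h v hv)
  obtain ⟨c, hc, hcS⟩ := exists_ne_zero_dotProduct_eq_zero_of_isFractionRing S hq
    fun v hv => by simpa using hqS _ ⟨v, hv, rfl⟩
  exact exists_dotProduct_eq_zero_not_dvd S hc hcS hn

theorem exists_zmod_affine_relation (p : ℕ) [Fact p.Prime] {T : Set (ι → ℤ)} (hT : T.Nonempty)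
    (a : ℝ) {α : ι → ℝ} (hα : α ≠ 0) (h : ∀ x ∈ T, a + α ⬝ᵥ (Int.cast ∘ x) = 0) :
    ∃ (b : ZMod p) (c : ι → ZMod p), c ≠ 0 ∧ ∀ x ∈ T, b + c ⬝ᵥ reduceMod p x = 0 := by
  let lift : (ι → ℤ) → Option ι → ℤ := fun x o => o.elim 1 x
  have hα' : (fun o => o.elim a α : Option ι → ℝ) ≠ 0 :=
    fun h0 => hα (funext fun i => congrFun h0 (some i))
  obtain ⟨c, ⟨o, ho⟩, hcS⟩ := exists_int_dotProduct_eq_zero_not_dvd (lift '' T) hα'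
    (by rintro _ ⟨x, hx, rfl⟩; simpa [lift, dotProduct, Fintype.sum_option] using h x hx)
    (Nat.prime_iff_prime_int.1 (Fact.out : p.Prime)).not_isUnit
  have hrel : ∀ x ∈ T,
      (c none : ZMod p) + (fun i => (c (some i) : ZMod p)) ⬝ᵥ reduceMod p x = 0 := by
    intro x hx
    have := congrArg (Int.cast : ℤ → ZMod p) (hcS _ ⟨x, hx, rfl⟩)
    simpa [lift, reduceMod, dotProduct, Fintype.sum_option] using this
  refine ⟨_, _, fun hc0 => ?_, hrel⟩
  obtain ⟨x₀, hx₀⟩ := hT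
  have hnone := hrel x₀ hx₀
  rw [hc0, zero_dotProduct, add_zero] at hnone
  rw [← ZMod.intCast_zmod_eq_zero_iff_dvd] at ho
  cases o with
  | none => exact ho hnone
  | some i => exact ho (congrFun hc0 i)

end Relations

theorem Finsupp.eq_zero_or_exists_eq_single_one_of_degree_le_one {σ : Type*} {m : σ →₀ ℕ}
    (h : m.degree ≤ 1) : m = 0 ∨ ∃ i, m = Finsupp.single i 1 := by
  rcases eq_or_ne m 0 with h0 | h0
  · exact Or.inl h0
  obtain ⟨i, hi⟩ := Finsupp.ne_iff.1 h0
  have hi1 : m i = 1 := by have := m.le_degree i; simp at hi; omega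
  have hle : Finsupp.single i 1 ≤ m := by simp [Finsupp.single_le_iff, hi1]
  have hdeg := congrArg Finsupp.degree (tsub_add_cancel_of_le hle)
  rw [map_add, Finsupp.degree_single] at hdeg
  have hrest : m - Finsupp.single i 1 = 0 := (Finsupp.degree_eq_zero_iff _).1 (by omega)
  exact Or.inr ⟨i, by rw [← tsub_add_cancel_of_le hle, hrest, zero_add]⟩

section AffineForm

variable {σ R : Type*} [Fintype σ] [CommSemiring R]

noncomputable def affineForm (b : R) (c : σ → R) : MvPolynomial σ R :=
  C b + ∑ i, C (c i) * X i

@[simp]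
theorem eval_affineForm (b : R) (c y : σ → R) : eval y (affineForm b c) = b + c ⬝ᵥ y := by
  simp [affineForm, dotProduct]

theorem coeff_affineForm [DecidableEq σ] (b : R) (c : σ → R) (m : σ →₀ ℕ) :
    (affineForm b c).coeff m =
      (if 0 = m then b else 0) + ∑ i, if Finsupp.single i 1 = m then c i else 0 := by
  simp only [affineForm, coeff_add, coeff_sum, C_mul_X_eq_monomial, coeff_monomial, coeff_C]

theorem totalDegree_affineForm_le (b : R) (c : σ → R) : (affineForm b c).totalDegree ≤ 1 := by
  refine (totalDegree_add _ _).trans (max_le (by simp) (totalDegree_finsetSum_le fun i _ => ?_))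
  rw [C_mul_X_eq_monomial]
  exact (totalDegree_monomial_le _ _).trans (by simp)

theorem totalDegree_affineForm [Nontrivial R] (b : R) {c : σ → R} (hc : c ≠ 0) :
    (affineForm b c).totalDegree = 1 := by
  classical
  obtain ⟨i, hi⟩ := Function.ne_iff.1 hc
  refine le_antisymm (totalDegree_affineForm_le b c) ?_
  have hmem : Finsupp.single i 1 ∈ (affineForm b c).support := by
    simpa [coeff_affineForm, Finsupp.single_left_inj, eq_comm (a := (0 : σ →₀ ℕ))] using hi
  simpa using le_totalDegree hmem

theorem eq_affineForm_of_totalDegree_le_one {f : MvPolynomial σ R} (hf : f.totalDegree ≤ 1) :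
    f = affineForm (f.coeff 0) fun i => f.coeff (Finsupp.single i 1) := by
  classical
  ext m
  rw [coeff_affineForm]
  by_cases hm : m = 0 ∨ ∃ i, m = Finsupp.single i 1
  · rcases hm with rfl | ⟨i, rfl⟩ <;> simp [Finsupp.single_left_inj, eq_comm (a := (0 : σ →₀ ℕ))]
  · have hfm : f.coeff m = 0 := notMem_support_iff.1 fun hmem =>
      hm (Finsupp.eq_zero_or_exists_eq_single_one_of_degree_le_one ((le_totalDegree hmem).trans hf))
    simp only [not_or, not_exists] at hm
    simp [hfm, Ne.symm hm.1, fun i => Ne.symm (hm.2 i)]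

theorem eval_eq_of_totalDegree_le_one {f : MvPolynomial σ R} (hf : f.totalDegree ≤ 1)
    (y : σ → R) : eval y f = f.coeff 0 + (fun i => f.coeff (Finsupp.single i 1)) ⬝ᵥ y := by
  rw [← eval_affineForm, ← eq_affineForm_of_totalDegree_le_one hf]

theorem coeff_single_ne_zero_of_totalDegree_eq_one {f : MvPolynomial σ R}
    (hf : f.totalDegree = 1) : (fun i => f.coeff (Finsupp.single i 1)) ≠ 0 := by
  intro h0
  rw [eq_affineForm_of_totalDegree_le_one hf.le, h0] at hf
  simp [affineForm] at hf

end AffineForm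

theorem eval_intCast_map {σ R : Type*} [CommRing R] (x : σ → ℤ) (Q : MvPolynomial σ ℤ) :
    eval (Int.cast ∘ x) (map (Int.castRingHom R) Q) = eval x Q := by
  simpa using (map_eval (Int.castRingHom R) x Q).symm

section QGeneric

variable {F : Type*} [Field F] {d : ℕ} {Q : MvPolynomial (Fin d) F} {D : Set (Fin d → F)}

theorem QGeneric.encard_hyperplane_le (hD : QGeneric Q D) (b : F) {c : Fin d → F}
    (hc : c ≠ 0) : {y ∈ D | b + c ⬝ᵥ y = 0}.encard ≤ d := by
  simpa using hD.1 _ (totalDegree_affineForm b hc)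

theorem QGeneric.encard_quadric_le (hD : QGeneric Q D) {t : F} (ht : t ≠ 0) (b : F)
    (c : Fin d → F) : {y ∈ D | t * eval y Q + (b + c ⬝ᵥ y) = 0}.encard ≤ d + 1 := by
  refine (hD.2 _ (totalDegree_affineForm_le (t⁻¹ * b) (t⁻¹ • c))).trans'
    (encard_mono fun y hy => ⟨hy.1, ?_⟩)
  calc eval y (Q + affineForm (t⁻¹ * b) (t⁻¹ • c))
      = t⁻¹ * (t * eval y Q + (b + c ⬝ᵥ y)) := by
        simp only [map_add, eval_affineForm, smul_dotProduct, smul_eq_mul]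
        field_simp
    _ = 0 := by rw [hy.2, mul_zero]

end QGeneric

theorem bijOn_reduceMod (p : ℕ) [NeZero p] {ι : Type*} (Dp : Set (ι → ZMod p)) :
    BijOn (reduceMod p) {x | (∀ i, 1 ≤ x i ∧ x i ≤ (p : ℤ)) ∧ reduceMod p x ∈ Dp} Dp := by
  refine ⟨fun x hx => hx.2, fun x hx y hy hxy => funext fun i => ?_, fun y hy => ?_⟩
  · have hdvd := (ZMod.intCast_eq_intCast_iff_dvd_sub (x i) (y i) p).1 (congrFun hxy i)
    have hx := hx.1 i
    have hy := hy.1 i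
    have := Int.eq_zero_of_abs_lt_dvd hdvd (abs_lt.2 ⟨by omega, by omega⟩)
    omega
  · -- `p - val (-y i)` is the representative of `y i` in `[1, p]`
    have hred : reduceMod p (fun i => p - ((-y i).val : ℤ)) = y := by
      funext i; simp [reduceMod]
    refine ⟨_, ⟨fun i => ⟨?_, ?_⟩, by rwa [hred]⟩, hred⟩
    · have := (-y i).val_lt; omega
    · omega

section Transfer

variable {p : ℕ} [Fact p.Prime] {d : ℕ} {Qp : MvPolynomial (Fin d) (ZMod p)}
  {Dp : Set (Fin d → ZMod p)} {T : Set (Fin d → ℤ)}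

theorem encard_le_of_real_hyperplane (hDp : QGeneric Qp Dp) (hinj : InjOn (reduceMod p) T)
    (hmaps : MapsTo (reduceMod p) T Dp) {f : MvPolynomial (Fin d) ℝ} (hf : f.totalDegree = 1)
    (hT : ∀ x ∈ T, eval (Int.cast ∘ x) f = 0) : T.encard ≤ d := by
  rcases T.eq_empty_or_nonempty with rfl | hne
  · simp
  obtain ⟨b, c, hc, hrel⟩ := exists_zmod_affine_relation p hne (f.coeff 0)
    (coeff_single_ne_zero_of_totalDegree_eq_one hf) fun x hx =>
      (eval_eq_of_totalDegree_le_one hf.le _).symm.trans (hT x hx)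
  exact (hDp.encard_hyperplane_le b hc).trans'
    (encard_le_encard_of_injOn (fun x hx => ⟨hmaps hx, hrel x hx⟩) hinj)

theorem encard_le_of_real_quadric (hDp : QGeneric Qp Dp) (hinj : InjOn (reduceMod p) T)
    (hmaps : MapsTo (reduceMod p) T Dp) {Q : MvPolynomial (Fin d) ℤ}
    (hred : map (Int.castRingHom (ZMod p)) Q = Qp) {f : MvPolynomial (Fin d) ℝ}
    (hf : f.totalDegree ≤ 1)
    (hT : ∀ x ∈ T, eval (Int.cast ∘ x) (map (Int.castRingHom ℝ) Q + f) = 0) :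
    T.encard ≤ d + 1 := by
  rcases T.eq_empty_or_nonempty with rfl | hne
  · simp
  -- the points `x ∈ T` lift to `(Q x, x)`, which lie on a hyperplane
  let lift : (Fin d → ℤ) → Option (Fin d) → ℤ := fun x o => o.elim (eval x Q) x
  obtain ⟨b, c, hc, hrel⟩ := exists_zmod_affine_relation p (hne.image lift) (f.coeff 0)
    (α := fun o => o.elim 1 fun i => f.coeff (Finsupp.single i 1))
    (Function.ne_iff.2 ⟨none, one_ne_zero⟩) (by
      rintro _ ⟨x, hx, rfl⟩
      have := hT x hx
      rw [map_add, eval_intCast_map, eval_eq_of_totalDegree_le_one hf] at this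
      simp only [lift, dotProduct, Fintype.sum_option, Option.elim_none, Option.elim_some,
        Function.comp_apply, one_mul] at this ⊢
      linarith)
  have hrel' : ∀ x ∈ T,
      c none * eval (reduceMod p x) Qp + (b + (c ∘ some) ⬝ᵥ reduceMod p x) = 0 := by
    intro x hx
    have hQ : eval (reduceMod p x) Qp = eval x Q := hred ▸ eval_intCast_map x Q
    have := hrel _ ⟨x, hx, rfl⟩
    rw [hQ]
    simp only [lift, reduceMod, dotProduct, Fintype.sum_option, Option.elim_none,
      Option.elim_some, Function.comp_apply] at this ⊢
    linear_combination this
  by_cases ht : c none = 0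
  · have hc' : c ∘ some ≠ 0 := fun h0 => hc <| funext fun o => by
      cases o with
      | none => exact ht
      | some i => exact congrFun h0 i
    refine ((hDp.encard_hyperplane_le b hc').trans le_self_add).trans'
      (encard_le_encard_of_injOn (fun x hx => ⟨hmaps hx, ?_⟩) hinj)
    simpa [ht] using hrel' x hx
  · exact (hDp.encard_quadric_le ht b _).trans'
      (encard_le_encard_of_injOn (fun x hx => ⟨hmaps hx, hrel' x hx⟩) hinj)

theorem QGeneric.intCast_image_of_reduceMod (hDp : QGeneric Qp Dp) {Q : MvPolynomial (Fin d) ℤ}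
    (hred : map (Int.castRingHom (ZMod p)) Q = Qp) {D : Set (Fin d → ℤ)}
    (hinj : InjOn (reduceMod p) D) (hmaps : MapsTo (reduceMod p) D Dp) :
    QGeneric (map (Int.castRingHom ℝ) Q) ((Int.cast ∘ ·) '' D) := by
  have hsep (g : MvPolynomial (Fin d) ℝ) : {y ∈ (Int.cast ∘ ·) '' D | eval y g = 0}.encard =
      {x ∈ D | eval (Int.cast ∘ x) g = 0}.encard := by
    have hinjR : Function.Injective (fun x : Fin d → ℤ => (Int.cast ∘ x : Fin d → ℝ)) :=
      Int.cast_injective.comp_left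
    exact (congrArg encard (image_inter_preimage _ D {y | eval y g = 0}).symm).trans
      (hinjR.encard_image _)
  refine ⟨fun f hf => ?_, fun f hf => ?_⟩ <;> rw [hsep]
  · exact encard_le_of_real_hyperplane hDp (hinj.mono (sep_subset _ _))
      (hmaps.mono_left (sep_subset _ _)) hf fun x hx => hx.2
  · exact encard_le_of_real_quadric hDp (hinj.mono (sep_subset _ _))
      (hmaps.mono_left (sep_subset _ _)) hred hf fun x hx => hx.2

end Transfer

theorem stmt_15_general (p : ℕ) [hp : Fact p.Prime] (d : ℕ)
    (Qp : MvPolynomial (Fin d) (ZMod p))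
    (Dp : Set (Fin d → ZMod p)) (hDp : QGeneric Qp Dp)
    (Q : MvPolynomial (Fin d) ℤ)
    (hred : MvPolynomial.map (Int.castRingHom (ZMod p)) Q = Qp)
    (D : Set (Fin d → ℤ))
    (hD : D = {x : Fin d → ℤ |
      (∀ i, 1 ≤ x i ∧ x i ≤ (p : ℤ)) ∧ (fun i => ((x i : ℤ) : ZMod p)) ∈ Dp}) :
    D.ncard = Dp.ncard ∧
    QGeneric (MvPolynomial.map (Int.castRingHom ℝ) Q)
      ((fun x : Fin d → ℤ => fun i : Fin d => ((x i : ℤ) : ℝ)) '' D) := by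
  have hbij : BijOn (reduceMod p) D Dp := hD ▸ bijOn_reduceMod p Dp
  exact ⟨hbij.ncard_eq, hDp.intCast_image_of_reduceMod hred hbij.injOn hbij.mapsTo⟩

/-- Let `p` be a prime, `d ≥ 2`, and `Q_p ∈ (ℤ/pℤ)[X₁,…,X_d]` a quadratic
form. Suppose `D_p ⊆ (ℤ/pℤ)^d` is `Q_p`-generic. Let `D ⊆ {1,…,p}^d ⊂ ℤ^d` consist of
the points whose coordinatewise reduction mod `p` lies in `D_p`, and `Q ∈ ℤ[X₁,…,X_d]`
a quadratic form with coprime coefficients reducing to `Q_p` mod `p`. Then `|D| = |D_p|`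
and `D`, viewed in `ℝ^d`, is `Q`-generic over `ℝ`. -/
theorem stmt_15 (p : ℕ) [hp : Fact p.Prime] (d : ℕ) (hd : 2 ≤ d)
    (Qp : MvPolynomial (Fin d) (ZMod p)) (hQp0 : Qp ≠ 0) (hQp : Qp.IsHomogeneous 2)
    (Dp : Set (Fin d → ZMod p)) (hDp : QGeneric Qp Dp)
    (Q : MvPolynomial (Fin d) ℤ) (hQh : Q.IsHomogeneous 2)
    (hprim : ∀ c : ℤ, (∀ m, c ∣ Q.coeff m) → IsUnit c)
    (hred : MvPolynomial.map (Int.castRingHom (ZMod p)) Q = Qp)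
    (D : Set (Fin d → ℤ))
    (hD : D = {x : Fin d → ℤ |
      (∀ i, 1 ≤ x i ∧ x i ≤ (p : ℤ)) ∧ (fun i => ((x i : ℤ) : ZMod p)) ∈ Dp}) :
    D.ncard = Dp.ncard ∧
    QGeneric (MvPolynomial.map (Int.castRingHom ℝ) Q)
      ((fun x : Fin d → ℤ => fun i : Fin d => ((x i : ℤ) : ℝ)) '' D) :=
  stmt_15_general p (hp := hp) d Qp Dp hDp Q hred D hD
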